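/- Let (A_m)_{m≥1} be a sequence of 2×2 matrices with nonnegative integer entries such that A_m·(1,1)ᵗ = d_m·(1,1)ᵗ with integers d_m ≥ 2, and let (Λ_m)_{m≥1} be a sequence of vectors in ℤ² satisfying Λ_m = A_m·Λ_{m+1} for all m. Then it is impossible that both entries of Λ_m are strictly positive for every m. -/

import Mathlib

open Matrix

/-! Row sums at least `2` and nonnegative entries make `A *ᵥ v ≥ 2 c` whenever `v ≥ c`.
Running the recursion `Λ m = A m *ᵥ Λ (m + 1)` downwards `k` times from positive (hence `≥ 1`)
integer vectors gives `Λ m ≥ 2 ^ k` for every `k`, which no fixed integer survives. -/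

theorem Matrix.rowSum_mul_le_mulVec_apply {m n R : Type*} [Fintype n] [Semiring R] [PartialOrder R]
    [IsOrderedRing R] {A : Matrix m n R} (hA : ∀ i j, 0 ≤ A i j) {v : n → R} {c : R}
    (hv : ∀ j, c ≤ v j) (i : m) : (∑ j, A i j) * c ≤ (A *ᵥ v) i := by
  rw [Finset.sum_mul]
  exact Finset.sum_le_sum fun j _ => mul_le_mul_of_nonneg_left (hv j) (hA i j)

theorem two_pow_le_of_eq_mulVec_succ {n R : Type*} [Fintype n] [CommSemiring R] [PartialOrder R]
    [IsOrderedRing R] {A : ℕ → Matrix n n R} {Λ : ℕ → n → R} (hA : ∀ m i j, 0 ≤ A m i j)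
    (hrow : ∀ m i, 2 ≤ ∑ j, A m i j) (hΛ : ∀ m, Λ m = A m *ᵥ Λ (m + 1))
    (hone : ∀ m i, 1 ≤ Λ m i) (k : ℕ) : ∀ m i, 2 ^ k ≤ Λ m i := by
  induction k with
  | zero => simpa using hone
  | succ k ih =>
    intro m i
    calc (2 : R) ^ (k + 1) = 2 * 2 ^ k := pow_succ' 2 k
      _ ≤ (∑ j, A m i j) * 2 ^ k := mul_le_mul_of_nonneg_right (hrow m i) (pow_nonneg zero_le_two k)
      _ ≤ (A m *ᵥ Λ (m + 1)) i := rowSum_mul_le_mulVec_apply (hA m) (ih (m + 1)) i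
      _ = Λ m i := by rw [hΛ m]

/-- The entries of `Λ m` cannot all stay strictly positive under
`Λ m = A m ⬝ Λ (m+1)` with nonnegative matrices of row sums `d m ≥ 2`. -/
theorem no_forever_positive_chern_vector
    (A : ℕ → Matrix (Fin 2) (Fin 2) ℤ) (d : ℕ → ℤ) (Λ : ℕ → Fin 2 → ℤ)
    (hA : ∀ m i j, 0 ≤ A m i j)
    (hd : ∀ m, 2 ≤ d m)
    (hrow : ∀ m, (A m).mulVec ![1, 1] = ![d m, d m])
    (hΛ : ∀ m, Λ m = (A m).mulVec (Λ (m + 1))) :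
    ¬ (∀ m i, 0 < Λ m i) := by
  intro hpos
  have hrowSum : ∀ m i, 2 ≤ ∑ j, A m i j := fun m i => by
    have h := congrFun (hrow m) i
    fin_cases i <;> simp [mulVec, dotProduct, Fin.sum_univ_two] at h ⊢ <;> linarith [hd m]
  obtain ⟨k, hk⟩ := pow_unbounded_of_one_lt (Λ 0 0) (one_lt_two : (1 : ℤ) < 2)
  exact hk.not_ge <| two_pow_le_of_eq_mulVec_succ hA hrowSum hΛ (fun m i => Order.one_le_iff_pos.2 (hpos m i)) k 0 0
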